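/- arXiv:1406.6859 — 3 statements merged into one kernel-verified Lean document; each statement's English description precedes it below -/
import Mathlib

section
/- Let an election with voters v_1, …, v_z (z odd) be single-crossing with respect to the order v_1 < v_2 < ⋯ < v_z, and let m be the median voter v_{(z+1)/2}. Then for every pair of distinct alternatives x, y, a strict majority of voters prefers x to y if and only if the median voter prefers x to y. Consequently, the top-ranked alternative of the median voter is a Condorcet winner. -/
/-!
The voters who prefer `y` to `x` form an order-interval of the voter line, by single-crossingness.
If the median voter prefers `x` to `y`, this interval avoids the median, so it lies strictly on
one side of it and contains at most `z / 2` voters; the remaining strict majority prefers `x`.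
-/

open Finset

theorem Set.OrdConnected.subset_Iio_or_subset_Ioi {ι : Type*} [LinearOrder ι] {s : Set ι}
    (hs : s.OrdConnected) {m : ι} (hm : m ∉ s) : s ⊆ Set.Iio m ∨ s ⊆ Set.Ioi m := by
  by_contra! h
  obtain ⟨⟨k, hks, hkm⟩, ⟨i, his, him⟩⟩ := Set.not_subset.1 h.1, Set.not_subset.1 h.2
  simp only [Set.mem_Iio, Set.mem_Ioi, not_lt] at hkm him
  exact hm (hs.out his hks ⟨him, hkm⟩)

theorem Fin.two_mul_card_lt_of_ordConnected {z : ℕ} (hz : Odd z) {s : Finset (Fin z)}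
    (hs : (s : Set (Fin z)).OrdConnected) {m : Fin z} (hm : (m : ℕ) = z / 2) (hms : m ∉ s) :
    2 * #s < z := by
  obtain ⟨t, rfl⟩ := hz
  rcases hs.subset_Iio_or_subset_Ioi (mem_coe.not.2 hms) with h | h
  · have := card_le_card (show s ⊆ Iio m by simpa [← coe_subset] using h)
    rw [Fin.card_Iio] at this
    omega
  · have := card_le_card (show s ⊆ Ioi m by simpa [← coe_subset] using h)
    rw [Fin.card_Ioi] at this
    omega

section Election

variable {ι C : Type*} (pref : ι → C → C → Prop)

def IsSingleCrossing [LinearOrder ι] : Prop :=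
  ∀ x y : C, x ≠ y → ∀ i j k : ι, i < j → j < k → pref i x y → pref k x y → pref j x y

abbrev supporters [Fintype ι] [∀ v, DecidableRel (pref v)] (x y : C) : Finset ι :=
  univ.filter fun v => pref v x y

variable {pref} [Fintype ι] [∀ v, DecidableRel (pref v)]

theorem card_supporters_add_card_supporters (hlin : ∀ v, IsStrictTotalOrder C (pref v))
    {x y : C} (hxy : x ≠ y) :
    #(supporters pref x y) + #(supporters pref y x) = Fintype.card ι := by
  have hswap : supporters pref y x = univ.filter fun v => ¬ pref v x y := by
    refine filter_congr fun v _ => ?_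
    have := hlin v
    exact ⟨asymm, fun h => (trichotomous_of (pref v) x y).resolve_left h |>.resolve_left hxy⟩
  rw [hswap, card_filter_add_card_filter_not, card_univ]

theorem IsSingleCrossing.ordConnected_supporters [LinearOrder ι] (hsc : IsSingleCrossing pref)
    {x y : C} (hxy : x ≠ y) : (supporters pref x y : Set ι).OrdConnected := by
  refine ⟨fun i hi k hk j ⟨hij, hjk⟩ => ?_⟩
  simp only [coe_filter, mem_univ, true_and, Set.mem_ofPred_eq] at hi hk ⊢
  rcases hij.lt_or_eq with hij | rfl
  · rcases hjk.lt_or_eq with hjk | rfl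
    · exact hsc x y hxy i j k hij hjk hi hk
    · exact hk
  · exact hi

end Election

section MedianVoter

variable {z : ℕ} {C : Type*} {pref : Fin z → C → C → Prop} [∀ v, DecidableRel (pref v)]
  {m : Fin z}

theorem card_supporters_add_card_supporters_fin (hlin : ∀ v, IsStrictTotalOrder C (pref v))
    {x y : C} (hxy : x ≠ y) : #(supporters pref x y) + #(supporters pref y x) = z :=
  (card_supporters_add_card_supporters hlin hxy).trans (Fintype.card_fin z)

theorem majority_of_median_prefers (hz : Odd z) (hlin : ∀ v, IsStrictTotalOrder C (pref v))
    (hsc : IsSingleCrossing pref) (hm : (m : ℕ) = z / 2) {x y : C} (hxy : x ≠ y)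
    (hmxy : pref m x y) : 2 * #(supporters pref x y) > z := by
  have hmin : m ∉ supporters pref y x := by
    have := hlin m
    simpa using asymm hmxy
  have := Fin.two_mul_card_lt_of_ordConnected hz (hsc.ordConnected_supporters hxy.symm) hm hmin
  have := card_supporters_add_card_supporters_fin hlin hxy
  omega

theorem majority_iff_median_prefers (hz : Odd z) (hlin : ∀ v, IsStrictTotalOrder C (pref v))
    (hsc : IsSingleCrossing pref) (hm : (m : ℕ) = z / 2) {x y : C} (hxy : x ≠ y) :
    2 * #(supporters pref x y) > z ↔ pref m x y := by
  refine ⟨fun hmaj => ?_, majority_of_median_prefers hz hlin hsc hm hxy⟩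
  have := hlin m
  rcases trichotomous_of (pref m) x y with hmxy | rfl | hmyx
  · exact hmxy
  · exact absurd rfl hxy
  · have := majority_of_median_prefers hz hlin hsc hm hxy.symm hmyx
    have := card_supporters_add_card_supporters_fin hlin hxy
    omega

theorem card_supporters_lt_of_median_prefers (hz : Odd z)
    (hlin : ∀ v, IsStrictTotalOrder C (pref v)) (hsc : IsSingleCrossing pref)
    (hm : (m : ℕ) = z / 2) {x y : C} (hxy : x ≠ y) (hmxy : pref m x y) :
    #(supporters pref y x) < #(supporters pref x y) := by
  have := majority_of_median_prefers hz hlin hsc hm hxy hmxy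
  have := card_supporters_add_card_supporters_fin hlin hxy
  omega

end MedianVoter

theorem stmt2_general {C : Type*} {z : ℕ} (hz : Odd z)
    (pref : Fin z → C → C → Prop) [∀ v, DecidableRel (pref v)]
    (hlin : ∀ v, IsStrictTotalOrder C (pref v))
    (hsc : ∀ x y : C, x ≠ y → ∀ i j k : Fin z, i < j → j < k →
      pref i x y → pref k x y → pref j x y) :
    ∀ m : Fin z, (m : ℕ) = z / 2 →
      ((∀ x y : C, x ≠ y →
        (2 * (Finset.univ.filter fun v => pref v x y).card > z ↔ pref m x y)) ∧
       (∀ c : C, (∀ a, a ≠ c → pref m c a) →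
         ∀ a, a ≠ c →
           (Finset.univ.filter fun v => pref v c a).card >
           (Finset.univ.filter fun v => pref v a c).card)) :=
  fun _ hm =>
    ⟨fun _ _ hxy => majority_iff_median_prefers hz hlin hsc hm hxy,
     fun _ htop a hac => card_supporters_lt_of_median_prefers hz hlin hsc hm hac.symm (htop a hac)⟩

/-- Median voter theorem for single-crossing elections with an odd number of
voters: a strict majority prefers x to y iff the median voter does, and hence
any alternative topping the median voter's order is a Condorcet winner. -/
theorem stmt2 {C : Type*} [Fintype C] {z : ℕ} (hz : Odd z)
    (pref : Fin z → C → C → Prop) [∀ v, DecidableRel (pref v)]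
    (hlin : ∀ v, IsStrictTotalOrder C (pref v))
    (hsc : ∀ x y : C, x ≠ y → ∀ i j k : Fin z, i < j → j < k →
      pref i x y → pref k x y → pref j x y) :
    ∀ m : Fin z, (m : ℕ) = z / 2 →
      ((∀ x y : C, x ≠ y →
        (2 * (Finset.univ.filter fun v => pref v x y).card > z ↔ pref m x y)) ∧
       (∀ c : C, (∀ a, a ≠ c → pref m c a) →
         ∀ a, a ≠ c →
           (Finset.univ.filter fun v => pref v c a).card >
           (Finset.univ.filter fun v => pref v a c).card)) :=
  stmt2_general hz pref hlin hsc
end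

section
/- Let W be a finite set of voters over m alternatives, and suppose κ : W → Set W is anonymous (voters with identical preference orders have identical bundles, and are treated identically as bundle members). If W' ⊆ W contains two voters with the same preference order, then removing one of them from W' does not change κ(W') = ⋃_{x ∈ W'} κ(x). Consequently, an optimal solution to anonymous combinatorial control by adding voters can be assumed to contain voters with pairwise distinct preference orders, so at most m! voters. -/
/-- For a leader-anonymous bundling function κ (voters with identical
preference orders, here encoded as rankings C ≃ Fin m, have identical
bundles): removing from W' a voter whose preference order is duplicated in W'
does not change κ(W') = ⋃_{x ∈ W'} κ(x); consequently every (finite) set of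
added voters can be replaced by a subset with pairwise distinct preference
orders — hence of size at most m! — having the same bundle union. -/
theorem stmt15 {C W : Type*} [Fintype C] [DecidableEq W]
    (pref : W → (C ≃ Fin (Fintype.card C)))
    (κ : W → Set W)
    (hleader : ∀ x y : W, pref x = pref y → κ x = κ y) :
    (∀ (W' : Set W), ∀ x ∈ W', ∀ y ∈ W', x ≠ y → pref x = pref y →
      (⋃ v ∈ W' \ {y}, κ v) = ⋃ v ∈ W', κ v) ∧
    (∀ W' : Finset W, ∃ W'' : Finset W, W'' ⊆ W' ∧
      (⋃ v ∈ W'', κ v) = (⋃ v ∈ W', κ v) ∧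
      Set.InjOn pref ↑W'' ∧ W''.card ≤ (Fintype.card C).factorial) := by
  constructor
  · intro W' x hx y hy hxy hpref
    apply Set.Subset.antisymm
    · exact Set.biUnion_subset_biUnion_left Set.diff_subset
    · intro a ha
      simp only [Set.mem_iUnion] at ha ⊢
      obtain ⟨v, hv, hav⟩ := ha
      by_cases hvy : v = y
      · exact ⟨x, ⟨hx, by simp [hxy]⟩, by rwa [hleader x y hpref, ← hvy]⟩
      · exact ⟨v, ⟨hv, by simp [hvy]⟩, hav⟩
  · intro W'
    classical
    -- for each preference in the image, pick a representative
    set S := W'.image pref with hS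
    have hrep : ∀ p ∈ S, ∃ v ∈ W', pref v = p := by
      intro p hp
      simpa [hS] using Finset.mem_image.mp hp
    choose f hf1 hf2 using hrep
    refine ⟨S.attach.image (fun p => f p.1 p.2), ?_, ?_, ?_, ?_⟩
    · intro v hv
      obtain ⟨p, _, rfl⟩ := Finset.mem_image.mp hv
      exact hf1 p.1 p.2
    · apply Set.Subset.antisymm
      · refine Set.iUnion₂_subset fun v hv => ?_
        obtain ⟨p, _, rfl⟩ := Finset.mem_image.mp hv
        exact Set.subset_biUnion_of_mem (u := fun v => κ v) (hf1 p.1 p.2)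
      · refine Set.iUnion₂_subset fun v hv => ?_
        have hp : pref v ∈ S := Finset.mem_image_of_mem pref hv
        have : κ (f (pref v) hp) = κ v := hleader _ _ (hf2 (pref v) hp)
        rw [← this]
        exact Set.subset_biUnion_of_mem (u := fun v => κ v)
          (Finset.mem_image.mpr ⟨⟨pref v, hp⟩, Finset.mem_attach _ _, rfl⟩)
    · intro a ha b hb hab
      simp only [Finset.coe_image, Set.mem_image] at ha hb
      obtain ⟨p, _, rfl⟩ := ha
      obtain ⟨q, _, rfl⟩ := hb
      have : p.1 = q.1 := by rw [← hf2 p.1 p.2, ← hf2 q.1 q.2, hab]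
      have : p = q := Subtype.ext this
      rw [this]
    · calc (S.attach.image (fun p => f p.1 p.2)).card
          ≤ S.attach.card := Finset.card_image_le
        _ = S.card := Finset.card_attach
        _ ≤ Fintype.card (C ≃ Fin (Fintype.card C)) := Finset.card_le_univ S
        _ = (Fintype.card C).factorial := by
            rw [Fintype.card_equiv (Fintype.equivFin C)]
end

section
/- Let voters x_1 < ⋯ < x_n be the single-crossing order of the unregistered voters, and let κ be a full-d bundling function (bundles are swap-distance balls of radius d). Then every bundle κ(x_i) is a set of consecutively ordered voters: if x_j, x_k ∈ κ(x_i) and j < l < k, then x_l ∈ κ(x_i). -/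
/-- The swap (Kendall tau) distance between two strict linear orders. -/
def swapDist {C : Type*} [Fintype C] (r s : C → C → Prop)
    [DecidableRel r] [DecidableRel s] : ℕ :=
  (Finset.univ.filter (fun p : C × C => r p.1 p.2 ∧ s p.2 p.1)).card

/- Single crossing makes every pair of alternatives switch at most once along the voter order, so
the pairs on which `x_i` and `x_l` disagree are among those on which `x_i` and the farther voter
`x_k` disagree. Hence the swap distance from `x_i` is monotone as one moves away from `x_i`, and
its sublevel sets are intervals. -/

theorem swapDist_le_of_agree {C : Type*} [Fintype C] {r s t : C → C → Prop}
    [DecidableRel r] [DecidableRel s] [DecidableRel t]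
    [Std.Irrefl r] [Std.Asymm s] [Std.Trichotomous t]
    (h : ∀ a b, r a b → t a b → s a b) : swapDist r s ≤ swapDist r t := by
  refine Finset.card_le_card fun p hp => ?_
  simp only [Finset.mem_filter, Finset.mem_univ, true_and] at hp ⊢
  obtain ⟨hr, hs⟩ := hp
  refine ⟨hr, ?_⟩
  rcases trichotomous (r := t) p.1 p.2 with ht | heq | ht
  · exact absurd hs (asymm (h _ _ hr ht))
  · exact absurd (heq ▸ hr) (irrefl _)
  · exact ht

theorem pref_of_le_of_le {C ι : Type*} [PartialOrder ι] {pref : ι → C → C → Prop}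
    [∀ i, Std.Irrefl (pref i)]
    (hsc : ∀ a b : C, a ≠ b → ∀ i j k : ι, i < j → j < k →
      pref i a b → pref k a b → pref j a b)
    {i j k : ι} (hij : i ≤ j) (hjk : j ≤ k) {a b : C} (hi : pref i a b) (hk : pref k a b) :
    pref j a b := by
  rcases hij.eq_or_lt with rfl | hij
  · exact hi
  rcases hjk.eq_or_lt with rfl | hjk
  · exact hk
  exact hsc a b (fun hab => irrefl (r := pref i) b (hab ▸ hi)) i j k hij hjk hi hk

/-- If the unregistered voters x_1 < ⋯ < x_n are in single-crossing order and
κ is a full-d bundling function (swap-distance balls of radius d), then each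
bundle consists of consecutively ordered voters. -/
theorem stmt17 {C : Type*} [Fintype C] {n : ℕ}
    (pref : Fin n → C → C → Prop) [∀ i, DecidableRel (pref i)]
    (hlin : ∀ i, IsStrictTotalOrder C (pref i))
    (hsc : ∀ a b : C, a ≠ b → ∀ i j k : Fin n, i < j → j < k →
      pref i a b → pref k a b → pref j a b)
    (d : ℕ) (κ : Fin n → Set (Fin n))
    (hfull : ∀ x : Fin n, κ x = {y : Fin n | swapDist (pref x) (pref y) ≤ d}) :
    ∀ i j k l : Fin n, j ∈ κ i → k ∈ κ i → j < l → l < k → l ∈ κ i := by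
  intro i j k l hj hk hjl hlk
  simp only [hfull, Set.mem_ofPred_eq] at hj hk ⊢
  have := hlin
  rcases le_or_gt i l with hil | hli
  · exact (swapDist_le_of_agree fun a b hi hk =>
      pref_of_le_of_le hsc hil hlk.le hi hk).trans hk
  · exact (swapDist_le_of_agree fun a b hi hj =>
      pref_of_le_of_le hsc hjl.le hli.le hj hi).trans hj
end
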